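/- Let G be the group with presentation ⟨g₁, g₂, g₃, g₄, g₅ | g₁⁸ = g₂² = g₃⁴ = g₄⁴ = g₅² = 1, g₁² = g₄, g₃² = g₄², g₄² = g₅, g₁⁻¹g₂g₁ = g₂g₃, g₁⁻¹g₃g₁ = g₃g₅, g₂⁻¹g₃g₂ = g₃g₅⟩. Then the subgroup K₂ of G generated by g₂ and g₃ is isomorphic to the dihedral group D₄ of order 8, and the subgroup K of G generated by g₂ and g₃g₄ is also isomorphic to the dihedral group D₄ of order 8. -/
import Mathlib


open FreeGroup in
/-- The relators of the presentation
`⟨g₁,…,g₅ | g₁⁸ = g₂² = g₃⁴ = g₄⁴ = g₅² = 1, g₁² = g₄, g₃² = g₄², g₄² = g₅,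
g₁⁻¹g₂g₁ = g₂g₃, g₁⁻¹g₃g₁ = g₃g₅, g₂⁻¹g₃g₂ = g₃g₅⟩`
(the generator `gᵢ` corresponds to the index `i - 1 : Fin 5`). -/
def prymRels : Set (FreeGroup (Fin 5)) :=
  { (of 0) ^ 8, (of 1) ^ 2, (of 2) ^ 4, (of 3) ^ 4, (of 4) ^ 2,
    (of 0) ^ 2 * (of 3)⁻¹,
    (of 2) ^ 2 * ((of 3) ^ 2)⁻¹,
    (of 3) ^ 2 * (of 4)⁻¹,
    (of 0)⁻¹ * of 1 * of 0 * (of 1 * of 2)⁻¹,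
    (of 0)⁻¹ * of 2 * of 0 * (of 2 * of 4)⁻¹,
    (of 1)⁻¹ * of 2 * of 1 * (of 2 * of 4)⁻¹ }

/-- The group `G ≅ (ℤ/4 × ℤ/4) ⋊ ℤ/2` given by the above presentation. -/
abbrev PrymGroup : Type := PresentedGroup prymRels

/-- The generator `gᵢ₊₁` of `PrymGroup`. -/
def gg (i : Fin 5) : PrymGroup := PresentedGroup.of i

namespace PrymAux

section Dihedral

variable {G : Type*} [Group G] {M : Type*} [Group M]

private theorem powmod {x : G} (hx : x ^ 4 = 1) (n : ℕ) : x ^ (n % 4) = x ^ n := by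
  conv_rhs => rw [← Nat.div_add_mod n 4]
  rw [pow_add, pow_mul, hx, one_pow, one_mul]

/-- `x ^ a` for `a : ZMod 4`. -/
def dpow (x : G) (a : ZMod 4) : G := x ^ a.val

theorem dpow_zero (x : G) : dpow x 0 = 1 := by rw [dpow, ZMod.val_zero, pow_zero]

theorem dpow_one (x : G) : dpow x 1 = x := by
  rw [dpow, show (1 : ZMod 4).val = 1 from rfl, pow_one]

theorem dpow_add {x : G} (hx : x ^ 4 = 1) (a b : ZMod 4) :
    dpow x (a + b) = dpow x a * dpow x b := by
  rw [dpow, dpow, dpow, ZMod.val_add, powmod hx, pow_add]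

theorem dpow_neg' {x : G} (hx : x ^ 4 = 1) (a : ZMod 4) : dpow x (-a) = (dpow x a)⁻¹ :=
  eq_inv_of_mul_eq_one_left (by rw [← dpow_add hx, neg_add_cancel, dpow_zero])

theorem y_dpow {x y : G} (hx : x ^ 4 = 1) (hy : y ^ 2 = 1) (hc : y * x * y = x⁻¹)
    (a : ZMod 4) : y * dpow x a = dpow x (-a) * y := by
  have hyy : y * y = 1 := by rw [← pow_two, hy]
  have hyi : y⁻¹ = y := inv_eq_of_mul_eq_one_right hyy
  have hyx : y * x = x⁻¹ * y := by
    calc y * x = y * x * y * y⁻¹ := by group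
    _ = x⁻¹ * y := by rw [hc, hyi]
  have key : ∀ n : ℕ, y * x ^ n = x⁻¹ ^ n * y := by
    intro n
    induction n with
    | zero => simp
    | succ n ih =>
      rw [pow_succ, ← mul_assoc, ih, mul_assoc, hyx, pow_succ, mul_assoc]
  rw [dpow_neg' hx]
  show y * x ^ a.val = (x ^ a.val)⁻¹ * y
  rw [key, inv_pow]

/-- The underlying function of the lift `DihedralGroup 4 → G`. -/
def dfun (x y : G) : DihedralGroup 4 → G
  | .r i => dpow x i
  | .sr i => y * dpow x i

/-- The lift `DihedralGroup 4 →* G` determined by an `x` with `x ^ 4 = 1` and an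
involution `y` inverting `x`. -/
def dlift (x y : G) (hx : x ^ 4 = 1) (hy : y ^ 2 = 1) (hc : y * x * y = x⁻¹) :
    DihedralGroup 4 →* G where
  toFun := dfun x y
  map_one' := dpow_zero x
  map_mul' := by
    have hyy : y * y = 1 := by rw [← pow_two, hy]
    have xiy : ∀ a : ZMod 4, dpow x a * y = y * dpow x (-a) := fun a => by
      rw [y_dpow hx hy hc, neg_neg]
    rintro (i | i) (j | j)
    · exact dpow_add hx i j
    · show y * dpow x (j - i) = dpow x i * (y * dpow x j)
      rw [← mul_assoc, xiy, mul_assoc, ← dpow_add hx, neg_add_eq_sub]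
    · show y * dpow x (i + j) = y * dpow x i * dpow x j
      rw [mul_assoc, ← dpow_add hx]
    · show dpow x (j - i) = y * dpow x i * (y * dpow x j)
      rw [mul_assoc, ← mul_assoc (dpow x i), xiy, ← mul_assoc, ← mul_assoc, hyy, one_mul,
        ← dpow_add hx, neg_add_eq_sub]

theorem dlift_range (x y : G) (hx : x ^ 4 = 1) (hy : y ^ 2 = 1) (hc : y * x * y = x⁻¹) :
    (dlift x y hx hy hc).range = Subgroup.closure {x, y} := by
  apply le_antisymm
  · rintro _ ⟨d, rfl⟩
    have hxm : x ∈ Subgroup.closure ({x, y} : Set G) :=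
      Subgroup.subset_closure (Set.mem_insert x _)
    have hym : y ∈ Subgroup.closure ({x, y} : Set G) :=
      Subgroup.subset_closure (Set.mem_insert_of_mem _ rfl)
    cases d with
    | r i =>
      show x ^ (i.val) ∈ _
      exact pow_mem hxm _
    | sr i =>
      show y * x ^ (i.val) ∈ _
      exact mul_mem hym (pow_mem hxm _)
  · rw [Subgroup.closure_le]
    rintro z (rfl | rfl)
    · exact ⟨.r 1, dpow_one z⟩
    · exact ⟨.sr 0, by show z * dpow x 0 = z; rw [dpow_zero, mul_one]⟩

theorem iso_closure {x y : G} (hx : x ^ 4 = 1) (hy : y ^ 2 = 1) (hc : y * x * y = x⁻¹)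
    {A B : M} (φ : G →* M) (hA : φ x = A) (hB : φ y = B)
    (hA4 : A ^ 4 = 1) (hB2 : B ^ 2 = 1) (hAB : B * A * B = A⁻¹)
    (hinj : Function.Injective (dlift A B hA4 hB2 hAB)) :
    Nonempty ((Subgroup.closure {x, y} : Subgroup G) ≃* DihedralGroup 4) := by
  have hcomp : ∀ d, φ (dlift x y hx hy hc d) = dlift A B hA4 hB2 hAB d := by
    rintro (i | i)
    · show φ (x ^ _) = A ^ _
      rw [map_pow, hA]
    · show φ (y * x ^ _) = B * A ^ _
      rw [map_mul, map_pow, hA, hB]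
  have hinj' : Function.Injective (dlift x y hx hy hc) := fun a b hab =>
    hinj (by rw [← hcomp, ← hcomp, hab])
  exact ⟨(MulEquiv.subgroupCongr (dlift_range x y hx hy hc)).symm.trans
    (MonoidHom.ofInjective hinj').symm⟩

theorem closure_pair {x y : G} (hyy : y * y = 1) :
    Subgroup.closure ({y, y * x} : Set G) = Subgroup.closure ({x, y} : Set G) := by
  apply le_antisymm
  · rw [Subgroup.closure_le]
    intro z hz
    simp only [Set.mem_insert_iff, Set.mem_singleton_iff] at hz
    rcases hz with h | h
    · rw [h]
      exact Subgroup.subset_closure (Set.mem_insert_of_mem _ rfl)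
    · rw [h]
      exact mul_mem (Subgroup.subset_closure (Set.mem_insert_of_mem _ rfl))
        (Subgroup.subset_closure (Set.mem_insert _ _))
  · rw [Subgroup.closure_le]
    intro z hz
    simp only [Set.mem_insert_iff, Set.mem_singleton_iff] at hz
    rcases hz with h | h
    · have hz2 : z = y * (y * x) := by rw [← mul_assoc, hyy, one_mul, h]
      rw [hz2]
      exact mul_mem (Subgroup.subset_closure (Set.mem_insert _ _))
        (Subgroup.subset_closure (Set.mem_insert_of_mem _ rfl))
    · rw [h]
      exact Subgroup.subset_closure (Set.mem_insert _ _)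

end Dihedral

/-! ### A concrete permutation model of `PrymGroup` -/

/-- Images of the five generators in `Equiv.Perm (Fin 8)`. -/
def P : Fin 5 → Equiv.Perm (Fin 8) :=
  ![⟨![4,5,6,7,1,2,3,0], ![7,4,5,6,0,1,2,3], by decide, by decide⟩,
    ⟨![7,4,5,6,1,2,3,0], ![7,4,5,6,1,2,3,0], by decide, by decide⟩,
    ⟨![1,2,3,0,7,4,5,6], ![3,0,1,2,5,6,7,4], by decide, by decide⟩,
    ⟨![1,2,3,0,5,6,7,4], ![3,0,1,2,7,4,5,6], by decide, by decide⟩,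
    ⟨![2,3,0,1,6,7,4,5], ![2,3,0,1,6,7,4,5], by decide, by decide⟩]

theorem P_rels : ∀ r ∈ prymRels, FreeGroup.lift P r = 1 := by
  intro r hr
  simp only [prymRels, Set.mem_insert_iff, Set.mem_singleton_iff] at hr
  rcases hr with rfl | rfl | rfl | rfl | rfl | rfl | rfl | rfl | rfl | rfl | rfl <;>
    simp only [map_mul, map_pow, map_inv, FreeGroup.lift_apply_of] <;> decide

/-- The homomorphism `PrymGroup →* Equiv.Perm (Fin 8)`. -/
noncomputable def φ : PrymGroup →* Equiv.Perm (Fin 8) := PresentedGroup.toGroup P_rels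

theorem φ_gg (i : Fin 5) : φ (gg i) = P i := PresentedGroup.toGroup.of P_rels

/-! ### The relations in `PrymGroup` -/

/-- The projection from the free group. -/
def π : FreeGroup (Fin 5) →* PrymGroup := QuotientGroup.mk' _

theorem pi_of (i : Fin 5) : π (FreeGroup.of i) = gg i := rfl

theorem rel_one {r : FreeGroup (Fin 5)} (h : r ∈ prymRels) : π r = 1 :=
  (QuotientGroup.eq_one_iff _).mpr (Subgroup.subset_normalClosure h)

theorem r2 : gg 1 ^ 2 = 1 := by
  have h := rel_one (r := (FreeGroup.of 1) ^ 2) (by simp [prymRels])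
  rwa [map_pow, pi_of] at h

theorem r3 : gg 2 ^ 4 = 1 := by
  have h := rel_one (r := (FreeGroup.of 2) ^ 4) (by simp [prymRels])
  rwa [map_pow, pi_of] at h

theorem r4 : gg 3 ^ 4 = 1 := by
  have h := rel_one (r := (FreeGroup.of 3) ^ 4) (by simp [prymRels])
  rwa [map_pow, pi_of] at h

theorem r5 : gg 4 ^ 2 = 1 := by
  have h := rel_one (r := (FreeGroup.of 4) ^ 2) (by simp [prymRels])
  rwa [map_pow, pi_of] at h

theorem e6 : gg 0 ^ 2 = gg 3 := by
  have h := rel_one (r := (FreeGroup.of 0) ^ 2 * (FreeGroup.of 3)⁻¹) (by simp [prymRels])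
  simp only [map_mul, map_pow, map_inv, pi_of] at h
  exact mul_inv_eq_one.mp h

theorem e7 : gg 2 ^ 2 = gg 3 ^ 2 := by
  have h := rel_one (r := (FreeGroup.of 2) ^ 2 * ((FreeGroup.of 3) ^ 2)⁻¹) (by simp [prymRels])
  simp only [map_mul, map_pow, map_inv, pi_of] at h
  exact mul_inv_eq_one.mp h

theorem e8 : gg 3 ^ 2 = gg 4 := by
  have h := rel_one (r := (FreeGroup.of 3) ^ 2 * (FreeGroup.of 4)⁻¹) (by simp [prymRels])
  simp only [map_mul, map_pow, map_inv, pi_of] at h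
  exact mul_inv_eq_one.mp h

theorem e9 : (gg 0)⁻¹ * gg 1 * gg 0 = gg 1 * gg 2 := by
  have h := rel_one
    (r := (FreeGroup.of 0)⁻¹ * FreeGroup.of 1 * FreeGroup.of 0 *
      (FreeGroup.of 1 * FreeGroup.of 2)⁻¹) (by simp [prymRels])
  simp only [map_mul, map_inv, pi_of] at h
  exact mul_inv_eq_one.mp h

theorem e10 : (gg 0)⁻¹ * gg 2 * gg 0 = gg 2 * gg 4 := by
  have h := rel_one
    (r := (FreeGroup.of 0)⁻¹ * FreeGroup.of 2 * FreeGroup.of 0 *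
      (FreeGroup.of 2 * FreeGroup.of 4)⁻¹) (by simp [prymRels])
  simp only [map_mul, map_inv, pi_of] at h
  exact mul_inv_eq_one.mp h

theorem e11 : (gg 1)⁻¹ * gg 2 * gg 1 = gg 2 * gg 4 := by
  have h := rel_one
    (r := (FreeGroup.of 1)⁻¹ * FreeGroup.of 2 * FreeGroup.of 1 *
      (FreeGroup.of 2 * FreeGroup.of 4)⁻¹) (by simp [prymRels])
  simp only [map_mul, map_inv, pi_of] at h
  exact mul_inv_eq_one.mp h

theorem i1 : (gg 1)⁻¹ = gg 1 :=
  inv_eq_of_mul_eq_one_right (by rw [← pow_two, r2])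

theorem i4 : (gg 4)⁻¹ = gg 4 :=
  inv_eq_of_mul_eq_one_right (by rw [← pow_two, r5])

theorem f_a4 : gg 4 = gg 2 ^ 2 := e8.symm.trans e7.symm

theorem hc2 : gg 1 * gg 2 * gg 1 = (gg 2)⁻¹ := by
  calc gg 1 * gg 2 * gg 1 = (gg 1)⁻¹ * gg 2 * gg 1 := by rw [i1]
    _ = gg 2 * gg 4 := e11
    _ = gg 2 * gg 2 ^ 2 := by rw [f_a4]
    _ = gg 2 ^ 3 := by rw [← pow_succ']
    _ = (gg 2)⁻¹ := eq_inv_of_mul_eq_one_left (by rw [← pow_succ, r3])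

theorem h04 : gg 4 = gg 0 ^ 4 := by
  rw [← e8, ← e6, ← pow_mul]

theorem c04 : gg 4 * gg 0 = gg 0 * gg 4 := by
  rw [h04]
  exact (((Commute.refl (gg 0)).pow_left 4)).eq

theorem c20 : gg 2 * gg 0 = gg 0 * (gg 2 * gg 4) := by
  rw [← e10]
  group

theorem comm23 : gg 2 * gg 3 = gg 3 * gg 2 := by
  have key : gg 2 * (gg 0 * gg 0) = (gg 0 * gg 0) * gg 2 := by
    calc gg 2 * (gg 0 * gg 0) = (gg 2 * gg 0) * gg 0 := by rw [mul_assoc]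
      _ = (gg 0 * (gg 2 * gg 4)) * gg 0 := by rw [c20]
      _ = gg 0 * (gg 2 * (gg 4 * gg 0)) := by group
      _ = gg 0 * (gg 2 * (gg 0 * gg 4)) := by rw [c04]
      _ = gg 0 * ((gg 2 * gg 0) * gg 4) := by group
      _ = gg 0 * ((gg 0 * (gg 2 * gg 4)) * gg 4) := by rw [c20]
      _ = (gg 0 * gg 0) * gg 2 * (gg 4 * gg 4) := by group
      _ = (gg 0 * gg 0) * gg 2 * (gg 4 ^ 2) := by rw [pow_two]
      _ = (gg 0 * gg 0) * gg 2 := by rw [r5, mul_one]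
  have h3 : gg 3 = gg 0 * gg 0 := by rw [← e6, pow_two]
  rw [h3, key]

theorem c10 : gg 1 * gg 0 * gg 1 = gg 0 * (gg 2)⁻¹ := by
  have h : gg 1 * gg 0 = gg 0 * (gg 1 * gg 2) := by
    rw [← e9]; group
  calc gg 1 * gg 0 * gg 1 = (gg 1 * gg 0) * gg 1 := rfl
    _ = gg 0 * (gg 1 * gg 2) * gg 1 := by rw [h]
    _ = gg 0 * (gg 1 * gg 2 * gg 1) := by group
    _ = gg 0 * (gg 2)⁻¹ := by rw [hc2]

theorem ci2 : (gg 2)⁻¹ * gg 0 = gg 0 * (gg 4 * (gg 2)⁻¹) := by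
  have h : (gg 0)⁻¹ * (gg 2)⁻¹ * gg 0 = gg 4 * (gg 2)⁻¹ := by
    have := congrArg (·⁻¹) e10
    simp only [mul_inv_rev, inv_inv] at this
    calc (gg 0)⁻¹ * (gg 2)⁻¹ * gg 0 = ((gg 0)⁻¹ * gg 2 * gg 0)⁻¹ := by group
      _ = (gg 2 * gg 4)⁻¹ := by rw [e10]
      _ = (gg 4)⁻¹ * (gg 2)⁻¹ := by rw [mul_inv_rev]
      _ = gg 4 * (gg 2)⁻¹ := by rw [i4]
  rw [← h]; group

theorem comm13 : gg 1 * gg 3 = gg 3 * gg 1 := by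
  have hinv2 : (gg 2)⁻¹ * (gg 2)⁻¹ = gg 4 := by
    rw [← mul_inv_rev, ← pow_two, e7, e8, i4]
  have key : gg 1 * gg 3 * gg 1 = gg 3 := by
    have h11 : gg 1 * gg 1 = 1 := by rw [← pow_two, r2]
    calc gg 1 * gg 3 * gg 1 = gg 1 * (gg 0 * gg 0) * gg 1 := by rw [← e6, pow_two]
      _ = (gg 1 * gg 0 * gg 1) * (gg 1 * gg 0 * gg 1) := by
          rw [show (gg 1 * gg 0 * gg 1) * (gg 1 * gg 0 * gg 1)
            = gg 1 * gg 0 * (gg 1 * gg 1) * gg 0 * gg 1 by group, h11, mul_one]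
          group
      _ = (gg 0 * (gg 2)⁻¹) * (gg 0 * (gg 2)⁻¹) := by rw [c10]
      _ = gg 0 * ((gg 2)⁻¹ * gg 0) * (gg 2)⁻¹ := by group
      _ = gg 0 * (gg 0 * (gg 4 * (gg 2)⁻¹)) * (gg 2)⁻¹ := by rw [ci2]
      _ = (gg 0 * gg 0) * gg 4 * ((gg 2)⁻¹ * (gg 2)⁻¹) := by group
      _ = (gg 0 * gg 0) * gg 4 * gg 4 := by rw [hinv2]
      _ = (gg 0 * gg 0) * (gg 4 ^ 2) := by rw [pow_two]; group
      _ = gg 0 * gg 0 := by rw [r5, mul_one]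
      _ = gg 3 := by rw [← pow_two, e6]
  calc gg 1 * gg 3 = (gg 1 * gg 3 * gg 1) * (gg 1)⁻¹ := by group
    _ = gg 3 * (gg 1)⁻¹ := by rw [key]
    _ = gg 3 * gg 1 := by rw [i1]

theorem inv_a : (gg 2 * gg 3) * (gg 2 * gg 3) = 1 := by
  calc (gg 2 * gg 3) * (gg 2 * gg 3) = gg 2 * (gg 3 * gg 2) * gg 3 := by group
    _ = gg 2 * (gg 2 * gg 3) * gg 3 := by rw [comm23]
    _ = (gg 2 ^ 2) * (gg 3 ^ 2) := by rw [pow_two, pow_two]; group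
    _ = (gg 3 ^ 2) * (gg 3 ^ 2) := by rw [e7]
    _ = gg 3 ^ 4 := by rw [← pow_add]
    _ = 1 := r4

end PrymAux

open PrymAux in
/-- The subgroups `K₂ = ⟨g₂, g₃⟩` and `K = ⟨g₂, g₃g₄⟩` of `G` are both isomorphic to the
dihedral group `D₄` of order 8. -/
theorem stmt7 :
    Nonempty ((Subgroup.closure {gg 1, gg 2} : Subgroup PrymGroup) ≃* DihedralGroup 4) ∧
    Nonempty ((Subgroup.closure {gg 1, gg 2 * gg 3} : Subgroup PrymGroup) ≃* DihedralGroup 4) := by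
  have h11 : gg 1 * gg 1 = 1 := by rw [← pow_two, r2]
  constructor
  · -- K₂ = ⟨g₂, g₃⟩
    rw [Set.pair_comm]
    exact iso_closure (x := gg 2) (y := gg 1) r3 r2 hc2 φ (φ_gg 2) (φ_gg 1)
      (by decide) (by decide) (by decide) (by decide)
  · -- K = ⟨g₂, g₃g₄⟩
    set x : PrymGroup := gg 1 * (gg 2 * gg 3) with hxdef
    have hyx : gg 1 * x = gg 2 * gg 3 := by rw [hxdef, ← mul_assoc, h11, one_mul]
    have hx2 : x ^ 2 = gg 4 := by
      calc x ^ 2 = gg 1 * gg 2 * (gg 3 * gg 1) * gg 2 * gg 3 := by rw [pow_two, hxdef]; group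
        _ = gg 1 * gg 2 * (gg 1 * gg 3) * gg 2 * gg 3 := by rw [comm13]
        _ = (gg 1 * gg 2 * gg 1) * (gg 3 * gg 2) * gg 3 := by group
        _ = (gg 1 * gg 2 * gg 1) * (gg 2 * gg 3) * gg 3 := by rw [comm23]
        _ = (gg 2)⁻¹ * (gg 2 * gg 3) * gg 3 := by rw [hc2]
        _ = gg 3 ^ 2 := by rw [pow_two]; group
        _ = gg 4 := e8
    have hx4 : x ^ 4 = 1 := by
      rw [show (4 : ℕ) = 2 * 2 from rfl, pow_mul, hx2, r5]
    have hia : (gg 2 * gg 3)⁻¹ = gg 2 * gg 3 := inv_eq_of_mul_eq_one_right inv_a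
    have hcx : gg 1 * x * gg 1 = x⁻¹ := by
      rw [hxdef, mul_inv_rev, hia, i1, ← mul_assoc, ← mul_assoc, h11, one_mul]
    have hclo : (Subgroup.closure {gg 1, gg 2 * gg 3} : Subgroup PrymGroup)
        = Subgroup.closure {x, gg 1} := by
      rw [← hyx, closure_pair h11]
    rw [hclo]
    have hA : φ x = P 1 * (P 2 * P 3) := by
      rw [hxdef, map_mul, map_mul, φ_gg, φ_gg, φ_gg]
    exact iso_closure (x := x) (y := gg 1) hx4 r2 hcx φ hA (φ_gg 1)
      (by decide) (by decide) (by decide) (by decide)
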